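/- Let μ be a Borel probability measure on E, let z ∈ E, and let w ∈ L¹(E,μ) be an integration-by-parts weight for (μ,z). Assume: (i) the pushforward measure μ∘g⁻¹ is absolutely continuous with respect to Lebesgue measure on ℝ; (ii) for μ-almost every x ∈ E the minimum of x over [0,1] is attained at a unique point, and τ : E → [0,1] is a measurable map with x(τ(x)) = g(x) for μ-a.e. x; (iii) for every φ ∈ C¹_b(E), every ε > 0 and every r ∈ ℝ with r + ε < 0: (1/(2ε)) ∫_{{x : r−ε ≤ g(x) ≤ r+ε}} z(τ(x)) φ(x) μ(dx) = − ∫_E θ_{r,ε}(g(x)) ( Dφ(x)(z) − w(x) φ(x) ) μ(dx). Let φ ∈ C¹_b(E) and assume in addition that the pushforward under x ↦ (g(x), τ(x)) of the measure φ·μ has a jointly measurable density q : ℝ × [0,1] → ℝ with respect to Lebesgue measure such that r ↦ ∫₀¹ z(s) q(r,s) ds is continuous on (−∞,0). Then for every r < 0: ∫₀¹ z(s) q(r,s) ds = − ∫_{{x : g(x) ≥ r}} ( Dφ(x)(z) − w(x) φ(x) ) μ(dx). -/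

import Mathlib

open MeasureTheory Filter

noncomputable section

/-- `E = C([0,1])` with the supremum norm. -/
abbrev E : Type := C(Set.Icc (0:ℝ) 1, ℝ)

/-- `φ ∈ C¹_b(X)`: `φ` is continuously Fréchet differentiable, bounded, with bounded
derivative. -/
def IsC1b {X : Type*} [NormedAddCommGroup X] [NormedSpace ℝ X] (φ : X → ℝ) : Prop :=
  ContDiff ℝ 1 φ ∧ (∃ C, ∀ x, |φ x| ≤ C) ∧ (∃ C, ∀ x, ‖fderiv ℝ φ x‖ ≤ C)

instance : MeasurableSpace E := borel E
instance : BorelSpace E := ⟨rfl⟩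

/-- `g(x) = min_{t ∈ [0,1]} x(t)`. -/
def g : E → ℝ := fun x => ⨅ t : Set.Icc (0:ℝ) 1, x t

/-- The piecewise linear cut-off `θ_{r,ε}`. -/
def theta (r ε ξ : ℝ) : ℝ :=
  if ξ < r - ε then 0 else if ξ ≤ r + ε then (ξ - r + ε) / (2 * ε) else 1

/-!
Testing the joint density against `1_{[a,b]}(r) z(s)` turns the slab integral
`∫_{a ≤ g ≤ b} z(τ) φ dμ` into `∫_a^b F`, where `F r = ∫₀¹ z(s) q(r,s) ds`. This requires `q` to
be integrable, which holds because all its set integrals are bounded by `∫ |φ| dμ`. The left side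
of the identity (iii) is therefore the average of `F` over `[r - ε, r + ε]`, which tends to `F r`
by continuity, while `θ_{r,ε} ∘ g → 1_{g ≥ r}` off the null set `{g = r}`, so the right side
converges by dominated convergence.
-/

open Set Topology

lemma continuous_g : Continuous g := by
  refine (LipschitzWith.of_le_add fun x y => ?_).continuous
  have hb : BddBelow (range fun t => x t) := (isCompact_range x.continuous).bddBelow
  suffices g x - dist x y ≤ g y by linarith
  refine le_ciInf fun t : Icc (0:ℝ) 1 => ?_
  have hdist : dist (x t) (y t) ≤ dist x y := ContinuousMap.dist_apply_le_dist t
  have hgx : g x ≤ x t := ciInf_le hb t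
  rw [Real.dist_eq] at hdist
  linarith [le_abs_self (x t - y t)]

lemma measurable_theta (r ε : ℝ) : Measurable (theta r ε) :=
  Measurable.ite (measurableSet_lt measurable_id measurable_const) measurable_const
    (Measurable.ite (measurableSet_le measurable_id measurable_const)
      (((measurable_id.sub_const r).add_const ε).div_const _) measurable_const)

lemma abs_theta_le_one {r ε : ℝ} (hε : 0 < ε) (ξ : ℝ) : |theta r ε ξ| ≤ 1 := by
  unfold theta
  split_ifs with h₁ h₂
  · simp
  · rw [abs_le, le_div_iff₀ (by positivity), div_le_one (by positivity)]
    constructor <;> linarith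
  · simp

lemma tendsto_theta_nhdsGT {r ξ : ℝ} (hξ : ξ ≠ r) :
    Tendsto (fun ε => theta r ε ξ) (𝓝[>] 0) (𝓝 ((Ici r).indicator 1 ξ)) := by
  rcases hξ.lt_or_gt with hlt | hgt
  · rw [indicator_of_notMem (show ξ ∉ Ici r from not_le.2 hlt)]
    refine tendsto_const_nhds.congr' ?_
    filter_upwards [Ioo_mem_nhdsGT (sub_pos.2 hlt)] with ε hε
    simp [theta, show ξ < r - ε by linarith [hε.2]]
  · rw [indicator_of_mem (mem_Ici.2 hgt.le)]
    refine tendsto_const_nhds.congr' ?_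
    filter_upwards [Ioo_mem_nhdsGT (sub_pos.2 hgt)] with ε hε
    simp [theta, show ¬ ξ < r - ε by linarith [hε.1, hε.2],
      show ¬ ξ ≤ r + ε by linarith [hε.2]]

theorem tendsto_integral_theta_comp_mul {α : Type*} [MeasurableSpace α] {μ : Measure α}
    {G : α → ℝ} (hG : Measurable G) {h : α → ℝ} (hh : Integrable h μ) {r : ℝ}
    (hr : ∀ᵐ x ∂μ, G x ≠ r) :
    Tendsto (fun ε => ∫ x, theta r ε (G x) * h x ∂μ) (𝓝[>] 0)
      (𝓝 (∫ x in {x | r ≤ G x}, h x ∂μ)) := by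
  rw [← integral_indicator (measurableSet_le measurable_const hG)]
  refine tendsto_integral_filter_of_dominated_convergence (fun x => ‖h x‖)
    (.of_forall fun ε => ((measurable_theta r ε).comp hG).aestronglyMeasurable.mul hh.1)
    ?_ hh.norm ?_
  · filter_upwards [self_mem_nhdsWithin] with ε (hε : 0 < ε)
    refine ae_of_all _ fun x => ?_
    rw [norm_mul]
    exact mul_le_of_le_one_left (norm_nonneg _) (abs_theta_le_one hε _)
  · filter_upwards [hr] with x hx
    convert (tendsto_theta_nhdsGT hx).mul_const (h x) using 2
    by_cases hrx : r ≤ G x <;> simp [hrx]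

theorem tendsto_average_Icc_of_continuousAt {F : ℝ → ℝ} {r : ℝ}
    (hFi : LocallyIntegrable F volume) (hFc : ContinuousAt F r) :
    Tendsto (fun ε => 1 / (2 * ε) * ∫ t in Icc (r - ε) (r + ε), F t) (𝓝[>] 0) (𝓝 (F r)) := by
  rw [Metric.tendsto_nhdsWithin_nhds]
  intro δ hδ
  obtain ⟨η, hη, hball⟩ := Metric.continuousAt_iff.1 hFc (δ / 2) (half_pos hδ)
  refine ⟨η, hη, fun ε hε hεη => ?_⟩
  have hε : 0 < ε := hε
  rw [dist_zero_right, Real.norm_eq_abs, abs_of_pos hε] at hεη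
  have hvol : volume.real (Icc (r - ε) (r + ε)) = 2 * ε := by
    rw [Real.volume_real_Icc_of_le (by linarith)]; ring
  have hint : IntegrableOn F (Icc (r - ε) (r + ε)) := hFi.integrableOn_isCompact isCompact_Icc
  have hdev : ‖∫ t in Icc (r - ε) (r + ε), (F t - F r)‖ ≤ δ / 2 * (2 * ε) := by
    refine hvol ▸ norm_setIntegral_le_of_norm_le_const measure_Icc_lt_top fun t ht => ?_
    refine (hball ?_).le
    rw [Real.dist_eq, abs_lt]
    constructor <;> linarith [ht.1, ht.2]
  rw [integral_sub hint (integrableOn_const measure_Icc_lt_top.ne), setIntegral_const, hvol,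
    smul_eq_mul, Real.norm_eq_abs] at hdev
  rw [Real.dist_eq, show (1 / (2 * ε) * ∫ t in Icc (r - ε) (r + ε), F t) - F r
      = ((∫ t in Icc (r - ε) (r + ε), F t) - 2 * ε * F r) / (2 * ε) by field_simp,
    abs_div, abs_of_pos (by positivity : (0:ℝ) < 2 * ε), div_lt_iff₀ (by positivity)]
  nlinarith

section SignedDensity

variable {α β : Type*} [MeasurableSpace α] [MeasurableSpace β]

theorem integrable_of_forall_abs_setIntegral_le {μ : Measure α} [SigmaFinite μ] {f : α → ℝ}
    (hf : Measurable f) {C : ℝ} (hC : ∀ s, MeasurableSet s → |∫ x in s, f x ∂μ| ≤ C) :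
    Integrable f μ := by
  set t : ℕ → Set α := fun n => spanningSets μ n ∩ {x | |f x| ≤ n}
  have ht_meas (n : ℕ) : MeasurableSet (t n) :=
    (measurableSet_spanningSets μ n).inter (measurableSet_le hf.abs measurable_const)
  have ht_mono : Monotone t := fun m n hmn =>
    inter_subset_inter (monotone_spanningSets μ hmn)
      fun x (hx : |f x| ≤ m) => hx.trans (Nat.cast_le.2 hmn)
  have ht_univ : ⋃ n, t n = univ := by
    refine eq_univ_of_forall fun x => ?_
    obtain ⟨m, hm⟩ := mem_iUnion.1 (iUnion_spanningSets μ ▸ mem_univ x)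
    obtain ⟨k, hk⟩ := exists_nat_ge |f x|
    exact mem_iUnion.2 ⟨max m k, monotone_spanningSets μ (le_max_left _ _) hm,
      hk.trans (Nat.cast_le.2 (le_max_right _ _))⟩
  have hbound (n : ℕ) : ∫⁻ x in t n, ‖f x‖ₑ ∂μ ≤ ENNReal.ofReal (2 * C) := by
    have hint : IntegrableOn f (t n) μ :=
      Measure.integrableOn_of_bounded
        ((measure_mono inter_subset_left).trans_lt (measure_spanningSets_lt_top μ n)).ne
        hf.aestronglyMeasurable ((ae_restrict_iff' (ht_meas n)).2 (ae_of_all _ fun x hx => hx.2))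
    rw [← ofReal_integral_norm_eq_lintegral_enorm hint, integral_norm_eq_pos_sub_neg hint,
      Measure.restrict_restrict (measurableSet_le measurable_const hf),
      Measure.restrict_restrict (measurableSet_le hf measurable_const)]
    have h₁ := abs_le.1 (hC _ ((measurableSet_le (measurable_const (a := 0)) hf).inter (ht_meas n)))
    have h₂ := abs_le.1 (hC _ ((measurableSet_le hf (measurable_const (a := 0))).inter (ht_meas n)))
    exact ENNReal.ofReal_le_ofReal (by linarith)
  refine ⟨hf.aestronglyMeasurable, ?_⟩
  calc ∫⁻ x, ‖f x‖ₑ ∂μ = ⨆ n, ∫⁻ x in t n, ‖f x‖ₑ ∂μ := by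
        rw [← setLIntegral_iUnion_of_directed _ ht_mono.directed_le, ht_univ, Measure.restrict_univ]
    _ ≤ ENNReal.ofReal (2 * C) := iSup_le hbound
    _ < ⊤ := ENNReal.ofReal_lt_top

theorem integral_withDensity_ofReal {μ : Measure α} {ρ : α → ℝ} (hρ : AEMeasurable ρ μ)
    (f : α → ℝ) :
    ∫ x, f x ∂μ.withDensity (fun x => ENNReal.ofReal (ρ x)) = ∫ x, f x * max (ρ x) 0 ∂μ := by
  refine (integral_withDensity_eq_integral_smul₀ hρ.real_toNNReal f).trans ?_
  simp_rw [NNReal.smul_def, smul_eq_mul, Real.coe_toNNReal', mul_comm]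

theorem integral_map_withDensity_ofReal {μ : Measure α} {G : α → β} (hG : Measurable G)
    {ρ : α → ℝ} (hρ : AEMeasurable ρ μ) {f : β → ℝ} (hf : Measurable f) :
    ∫ y, f y ∂(μ.withDensity fun x => ENNReal.ofReal (ρ x)).map G
      = ∫ x, f (G x) * max (ρ x) 0 ∂μ := by
  rw [integral_map hG.aemeasurable hf.aestronglyMeasurable, integral_withDensity_ofReal hρ]

theorem integral_indicator_one_comp_mul {μ : Measure α} {G : α → β} (hG : Measurable G)
    {B : Set β} (hB : MeasurableSet B) (φ : α → ℝ) :
    ∫ x, B.indicator (fun _ => (1:ℝ)) (G x) * φ x ∂μ = ∫ x in G ⁻¹' B, φ x ∂μ := by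
  rw [← integral_indicator (hG hB)]
  congr 1 with x
  by_cases hx : G x ∈ B <;> simp [hx]

-- The signed identity `(φ·μ) ∘ G⁻¹ = q·ν`, with the negative parts of both densities moved across.
theorem map_withDensity_add_withDensity_eq {μ : Measure α} {ν : Measure β} {G : α → β}
    (hG : Measurable G) {φ : α → ℝ} (hφ : Integrable φ μ) {q : β → ℝ} (hq : Integrable q ν)
    (h : ∀ B, MeasurableSet B → ∫ x in G ⁻¹' B, φ x ∂μ = ∫ p in B, q p ∂ν) :
    (μ.withDensity fun x => ENNReal.ofReal (φ x)).map G
        + ν.withDensity (fun p => ENNReal.ofReal (-q p))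
      = (μ.withDensity fun x => ENNReal.ofReal (-φ x)).map G
        + ν.withDensity (fun p => ENNReal.ofReal (q p)) := by
  have := isFiniteMeasure_withDensity_ofReal hφ.2
  have := isFiniteMeasure_withDensity_ofReal hφ.neg.2
  have := isFiniteMeasure_withDensity_ofReal hq.2
  have := isFiniteMeasure_withDensity_ofReal hq.neg.2
  ext B hB
  have hreal := h B hB
  rw [integral_eq_lintegral_pos_part_sub_lintegral_neg_part hφ.integrableOn,
    integral_eq_lintegral_pos_part_sub_lintegral_neg_part hq.integrableOn] at hreal
  rw [← ENNReal.toReal_eq_toReal_iff' (measure_ne_top _ _) (measure_ne_top _ _),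
    Measure.add_apply, Measure.add_apply, ENNReal.toReal_add (measure_ne_top _ _)
    (measure_ne_top _ _), ENNReal.toReal_add (measure_ne_top _ _) (measure_ne_top _ _),
    Measure.map_apply hG hB, Measure.map_apply hG hB, withDensity_apply _ (hG hB),
    withDensity_apply _ (hG hB), withDensity_apply _ hB, withDensity_apply _ hB]
  linarith

theorem integral_comp_mul_eq_of_forall_setIntegral_preimage_eq {μ : Measure α} {ν : Measure β}
    {G : α → β} (hG : Measurable G) {φ : α → ℝ} (hφ : Integrable φ μ) {q : β → ℝ}
    (hq : Integrable q ν) (h : ∀ B, MeasurableSet B → ∫ x in G ⁻¹' B, φ x ∂μ = ∫ p in B, q p ∂ν)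
    {f : β → ℝ} (hf : Measurable f) {C : ℝ} (hfC : ∀ p, ‖f p‖ ≤ C) :
    ∫ x, f (G x) * φ x ∂μ = ∫ p, f p * q p ∂ν := by
  have := isFiniteMeasure_withDensity_ofReal hφ.2
  have := isFiniteMeasure_withDensity_ofReal hφ.neg.2
  have := isFiniteMeasure_withDensity_ofReal hq.2
  have := isFiniteMeasure_withDensity_ofReal hq.neg.2
  have hfi (m : Measure β) [IsFiniteMeasure m] : Integrable f m :=
    .of_bound hf.aestronglyMeasurable C (ae_of_all _ hfC)
  have hsplit := congrArg (fun m => ∫ p, f p ∂m) (map_withDensity_add_withDensity_eq hG hφ hq h)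
  rw [integral_add_measure (hfi _) (hfi _), integral_add_measure (hfi _) (hfi _),
    integral_map_withDensity_ofReal hG hφ.aemeasurable hf,
    integral_map_withDensity_ofReal (ρ := fun x => -φ x) hG hφ.aemeasurable.neg hf,
    integral_withDensity_ofReal (ρ := fun p => -q p) hq.aemeasurable.neg,
    integral_withDensity_ofReal hq.aemeasurable] at hsplit
  have hμ {ψ : α → ℝ} (hψ : Integrable ψ μ) : Integrable (fun x => f (G x) * ψ x) μ :=
    hψ.bdd_mul (hf.comp hG).aestronglyMeasurable (ae_of_all _ fun x => hfC (G x))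
  have hν {ψ : β → ℝ} (hψ : Integrable ψ ν) : Integrable (fun p => f p * ψ p) ν :=
    hψ.bdd_mul hf.aestronglyMeasurable (ae_of_all _ hfC)
  have hφ_split : ∫ x, f (G x) * φ x ∂μ
      = ∫ x, f (G x) * max (φ x) 0 ∂μ - ∫ x, f (G x) * max (-φ x) 0 ∂μ := by
    rw [← integral_sub (hμ hφ.pos_part) (hμ hφ.neg_part)]
    simp_rw [← mul_sub, max_zero_sub_max_neg_zero_eq_self]
  have hq_split : ∫ p, f p * q p ∂ν
      = ∫ p, f p * max (q p) 0 ∂ν - ∫ p, f p * max (-q p) 0 ∂ν := by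
    rw [← integral_sub (hν hq.pos_part) (hν hq.neg_part)]
    simp_rw [← mul_sub, max_zero_sub_max_neg_zero_eq_self]
  linarith

theorem setIntegral_preimage_Icc_eq_of_jointDensity {Y : Type*} [MeasurableSpace Y]
    {μ : Measure α} {ν : Measure Y} [SFinite ν] {g : α → ℝ} (hg : Measurable g) {τ : α → Y}
    (hτ : Measurable τ) {φ : α → ℝ} (hφ : Integrable φ μ) {q : ℝ × Y → ℝ}
    (hq : Integrable q (volume.prod ν))
    (h : ∀ B, MeasurableSet B →
      ∫ x in (fun x => (g x, τ x)) ⁻¹' B, φ x ∂μ = ∫ p in B, q p ∂(volume.prod ν))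
    {z : Y → ℝ} (hz : Measurable z) {C : ℝ} (hzC : ∀ y, ‖z y‖ ≤ C) (a b : ℝ) :
    ∫ x in g ⁻¹' Icc a b, z (τ x) * φ x ∂μ = ∫ t in Icc a b, ∫ y, z y * q (t, y) ∂ν := by
  set f := (Icc a b ×ˢ univ).indicator fun p : ℝ × Y => z p.2
  have hzq : Integrable (fun p => z p.2 * q p) (volume.prod ν) :=
    hq.bdd_mul (hz.comp measurable_snd).aestronglyMeasurable (ae_of_all _ fun p => hzC p.2)
  calc ∫ x in g ⁻¹' Icc a b, z (τ x) * φ x ∂μ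
      = ∫ x, f (g x, τ x) * φ x ∂μ := by
        rw [← integral_indicator (hg measurableSet_Icc)]
        congr 1 with x
        by_cases hx : g x ∈ Icc a b <;> simp [f, hx]
    _ = ∫ p, f p * q p ∂(volume.prod ν) :=
        integral_comp_mul_eq_of_forall_setIntegral_preimage_eq (hg.prodMk hτ) hφ hq h
          ((hz.comp measurable_snd).indicator (measurableSet_Icc.prod .univ))
          fun p => (norm_indicator_le_norm_self _ p).trans (hzC p.2)
    _ = ∫ p in Icc a b ×ˢ univ, z p.2 * q p ∂(volume.prod ν) := by
        rw [← integral_indicator (measurableSet_Icc.prod .univ)]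
        congr 1 with p
        by_cases hp : p.1 ∈ Icc a b <;> simp [f, hp]
    _ = ∫ t in Icc a b, ∫ y, z y * q (t, y) ∂ν := by
        rw [setIntegral_prod _ hzq.integrableOn, Measure.restrict_univ]

end SignedDensity

lemma IsC1b.integrable {X : Type*} [NormedAddCommGroup X] [NormedSpace ℝ X] [MeasurableSpace X]
    [OpensMeasurableSpace X] {φ : X → ℝ} (hφ : IsC1b φ) (μ : Measure X) [IsFiniteMeasure μ] :
    Integrable φ μ :=
  let ⟨C, hC⟩ := hφ.2.1
  .of_bound hφ.1.continuous.aestronglyMeasurable C (ae_of_all _ hC)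

lemma IsC1b.integrable_fderiv_apply {X : Type*} [NormedAddCommGroup X] [NormedSpace ℝ X]
    [MeasurableSpace X] [OpensMeasurableSpace X] {φ : X → ℝ} (hφ : IsC1b φ) (μ : Measure X)
    [IsFiniteMeasure μ] (v : X) : Integrable (fun x => fderiv ℝ φ x v) μ :=
  let ⟨C, hC⟩ := hφ.2.2
  .of_bound ((hφ.1.continuous_fderiv one_ne_zero).clm_apply continuous_const).aestronglyMeasurable
    (C * ‖v‖) (ae_of_all _ fun x => (fderiv ℝ φ x).le_of_opNorm_le (hC x) v)

theorem surface_integration_by_parts_with_joint_density_general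
    (μ : Measure E) [IsProbabilityMeasure μ] (z : E) (w : E → ℝ)
    (hw : Integrable w μ)
    (habs : μ.map g ≪ (volume : Measure ℝ))
    (τ : E → Set.Icc (0:ℝ) 1) (hτmeas : Measurable τ)
    (hkey : ∀ φ : E → ℝ, IsC1b φ → ∀ ε : ℝ, 0 < ε → ∀ r : ℝ, r + ε < 0 →
      (1 / (2 * ε)) * ∫ x in {x | r - ε ≤ g x ∧ g x ≤ r + ε}, z (τ x) * φ x ∂μ
        = - ∫ x, theta r ε (g x) * (fderiv ℝ φ x z - w x * φ x) ∂μ)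
    (φ : E → ℝ) (hφ : IsC1b φ)
    (q : ℝ × Set.Icc (0:ℝ) 1 → ℝ) (hqmeas : Measurable q)
    (hq : ∀ B : Set (ℝ × Set.Icc (0:ℝ) 1), MeasurableSet B →
      ∫ x, B.indicator (fun _ => (1:ℝ)) (g x, τ x) * φ x ∂μ
        = ∫ p in B, q p ∂((volume : Measure ℝ).prod (volume : Measure (Set.Icc (0:ℝ) 1))))
    (hqc : ContinuousOn (fun r : ℝ => ∫ s : Set.Icc (0:ℝ) 1, z s * q (r, s)) (Set.Iio 0)) :
    ∀ r : ℝ, r < 0 →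
      ∫ s : Set.Icc (0:ℝ) 1, z s * q (r, s)
        = - ∫ x in {x | r ≤ g x}, (fderiv ℝ φ x z - w x * φ x) ∂μ := by
  intro r hr
  have hg : Measurable g := continuous_g.measurable
  have hG : Measurable fun x => (g x, τ x) := hg.prodMk hτmeas
  have hφi := hφ.integrable μ
  have hq' (B : Set (ℝ × Icc (0:ℝ) 1)) (hB : MeasurableSet B) :=
    (integral_indicator_one_comp_mul hG hB φ).symm.trans (hq B hB)
  have hqi : Integrable q (volume.prod volume) :=
    integrable_of_forall_abs_setIntegral_le hqmeas fun B hB => (hq' B hB) ▸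
      abs_integral_le_integral_abs.trans
        (setIntegral_le_integral hφi.abs (ae_of_all _ fun x => abs_nonneg (φ x)))
  have hzq : Integrable (fun p => z p.2 * q p) (volume.prod volume) :=
    hqi.bdd_mul (z.continuous.comp continuous_snd).aestronglyMeasurable
      (ae_of_all _ fun p => z.norm_coe_le_norm p.2)
  have hh : Integrable (fun x => fderiv ℝ φ x z - w x * φ x) μ :=
    (hφ.integrable_fderiv_apply μ z).sub (hw.mul_bdd hφi.1 (ae_of_all _ hφ.2.1.choose_spec))
  have hne : ∀ᵐ x ∂μ, g x ≠ r :=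
    (ae_map_iff hg.aemeasurable (measurableSet_singleton r).compl).1
      (habs.ae_le (volume.ae_ne r))
  refine tendsto_nhds_unique ((tendsto_average_Icc_of_continuousAt
      hzq.integral_prod_left.locallyIntegrable (hqc.continuousAt (Iio_mem_nhds hr))).congr' ?_)
    (tendsto_integral_theta_comp_mul hg hh hne).neg
  filter_upwards [Ioo_mem_nhdsGT (neg_pos.2 hr)] with ε hε
  rw [← setIntegral_preimage_Icc_eq_of_jointDensity hg hτmeas hφi hqi hq' z.continuous.measurable
    (z.norm_coe_le_norm ·)]
  exact hkey φ hφ ε hε.1 r (by linarith [hε.2])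

/-- If in addition the pushforward under `x ↦ (g(x), τ(x))` of the measure
`φ·μ` admits a jointly measurable density `q` with respect to Lebesgue measure on
`ℝ × [0,1]`, with `r ↦ ∫₀¹ z(s) q(r,s) ds` continuous on `(−∞,0)`, then for every `r < 0`,
`∫₀¹ z(s) q(r,s) ds = −∫_{g ≥ r} (Dφ·z − wφ) dμ`. -/
theorem surface_integration_by_parts_with_joint_density
    (μ : Measure E) [IsProbabilityMeasure μ] (z : E) (w : E → ℝ)
    (hw : Integrable w μ)
    (hweight : ∀ φ : E → ℝ, IsC1b φ → ∫ x, fderiv ℝ φ x z ∂μ = ∫ x, φ x * w x ∂μ)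
    (habs : μ.map g ≪ (volume : Measure ℝ))
    (huniq : ∀ᵐ x ∂μ, ∃! t : Set.Icc (0:ℝ) 1, x t = g x)
    (τ : E → Set.Icc (0:ℝ) 1) (hτmeas : Measurable τ)
    (hτ : ∀ᵐ x ∂μ, x (τ x) = g x)
    (hkey : ∀ φ : E → ℝ, IsC1b φ → ∀ ε : ℝ, 0 < ε → ∀ r : ℝ, r + ε < 0 →
      (1 / (2 * ε)) * ∫ x in {x | r - ε ≤ g x ∧ g x ≤ r + ε}, z (τ x) * φ x ∂μ
        = - ∫ x, theta r ε (g x) * (fderiv ℝ φ x z - w x * φ x) ∂μ)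
    (φ : E → ℝ) (hφ : IsC1b φ)
    (q : ℝ × Set.Icc (0:ℝ) 1 → ℝ) (hqmeas : Measurable q)
    (hq : ∀ B : Set (ℝ × Set.Icc (0:ℝ) 1), MeasurableSet B →
      ∫ x, B.indicator (fun _ => (1:ℝ)) (g x, τ x) * φ x ∂μ
        = ∫ p in B, q p ∂((volume : Measure ℝ).prod (volume : Measure (Set.Icc (0:ℝ) 1))))
    (hqc : ContinuousOn (fun r : ℝ => ∫ s : Set.Icc (0:ℝ) 1, z s * q (r, s)) (Set.Iio 0)) :
    ∀ r : ℝ, r < 0 →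
      ∫ s : Set.Icc (0:ℝ) 1, z s * q (r, s)
        = - ∫ x in {x | r ≤ g x}, (fderiv ℝ φ x z - w x * φ x) ∂μ :=
  surface_integration_by_parts_with_joint_density_general μ z w hw habs τ hτmeas hkey φ hφ q hqmeas
    hq hqc
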